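/- Let H be a hereditary and union-closed class of graphs, let G be a graph, let X be an H-deletion set in G of minimum size among all H-deletion sets in G, let k ≥ 0 be an integer, and let Z ⊆ V(G) be weakly (H,k)-separable. Then λ_G(Z,X) ≤ 2k. -/

import Mathlib

/-! Common definitions: rooted trees, graph classes, tree H-decompositions,
H-treewidth, separators, separations, (H,ℓ)-separations, deletion sets. -/

/-- A (finite) rooted tree, encoded by a finite node type together with a parent
function under which every node eventually reaches the root. -/
structure RTree : Type 1 where
  ι : Type
  fin : Fintype ι
  root : ι
  parent : ι → ι
  parent_root : parent root = root
  wf : ∀ t : ι, ∃ n : ℕ, parent^[n] t = root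

/-- The undirected graph underlying a rooted tree. -/
def RTree.graph (T : RTree) : SimpleGraph T.ι where
  Adj s t := s ≠ t ∧ (T.parent s = t ∨ T.parent t = s)
  symm := ⟨fun _ _ h => ⟨Ne.symm h.1, h.2.symm⟩⟩
  loopless := ⟨fun _ h => h.1 rfl⟩

/-- A leaf of a rooted tree: a node with no children. -/
def RTree.IsLeaf (T : RTree) (t : T.ι) : Prop :=
  ∀ u : T.ι, T.parent u = t → u = t

/-- A class of (simple) graphs. -/
abbrev GraphClass : Type 1 := ∀ {α : Type}, SimpleGraph α → Prop

/-- A graph class is hereditary if it is closed under (isomorphic copies of)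
induced subgraphs, i.e. closed under graph embeddings. -/
def Hereditary (H : GraphClass) : Prop :=
  ∀ {α β : Type} (G : SimpleGraph α) (G' : SimpleGraph β), H G → (G' ↪g G) → H G'

/-- A graph class is union-closed if it is closed under disjoint unions. -/
def UnionClosed (H : GraphClass) : Prop :=
  ∀ {α β : Type} (G₁ : SimpleGraph α) (G₂ : SimpleGraph β),
    H G₁ → H G₂ → H (G₁ ⊕g G₂)

/-- The graph class `H` contains the graph with no vertices. -/
def ContainsNullGraph (H : GraphClass) : Prop :=
  ∀ (α : Type), IsEmpty α → ∀ G : SimpleGraph α, H G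

variable {V : Type}

/-- `X` is an `H`-deletion set in `G` if `G - X` belongs to `H`. -/
def IsDeletionSet (H : GraphClass) (G : SimpleGraph V) (X : Set V) : Prop :=
  H (G.induce Xᶜ)

/-- `P` is an `(X,Y)`-separator in `G`: every walk from a vertex of `X` to a
vertex of `Y` contains a vertex of `P` (`P` may intersect `X ∪ Y`). -/
def IsSeparator (G : SimpleGraph V) (X Y P : Set V) : Prop :=
  ∀ ⦃x y : V⦄, x ∈ X → y ∈ Y → ∀ p : G.Walk x y, ∃ v ∈ p.support, v ∈ P

/-- `λ_G(X,Y)`: the minimum size of an `(X,Y)`-separator in `G`. -/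
noncomputable def lam (G : SimpleGraph V) (X Y : Set V) : ℕ :=
  sInf {n : ℕ | ∃ P : Set V, IsSeparator G X Y P ∧ P.ncard = n}

/-- `(A,B)` is a separation of `G`: `A ∪ B = V(G)` and there is no edge
between `A \ B` and `B \ A`. -/
def IsSeparation (G : SimpleGraph V) (A B : Set V) : Prop :=
  A ∪ B = Set.univ ∧ ∀ a ∈ A \ B, ∀ b ∈ B \ A, ¬ G.Adj a b

/-- `(C,S)` is an `(H,ℓ)`-separation in `G`: `C` and `S` are disjoint,
`G[C] ∈ H`, `|S| ≤ ℓ` and `N_G(C) ⊆ S`. -/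
def IsHSeparation (H : GraphClass) (G : SimpleGraph V) (ℓ : ℕ) (C S : Set V) : Prop :=
  Disjoint C S ∧ H (G.induce C) ∧ S.ncard ≤ ℓ ∧
    ∀ v ∈ C, ∀ u : V, G.Adj v u → u ∉ C → u ∈ S

/-- The separation `(C,S)` weakly covers `Z` if `Z ⊆ C ∪ S`. -/
def WeaklyCovers (C S Z : Set V) : Prop := Z ⊆ C ∪ S

/-- `Z` is weakly `(H,ℓ)`-separable if some `(H,ℓ)`-separation weakly covers it. -/
def WeaklySeparable (H : GraphClass) (G : SimpleGraph V) (ℓ : ℕ) (Z : Set V) : Prop :=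
  ∃ C S : Set V, IsHSeparation H G ℓ C S ∧ WeaklyCovers C S Z

/-- A subset `X'` of an `H`-deletion set `X` is redundant in `X` if it can be
replaced by a strictly smaller set. -/
def Redundant (H : GraphClass) (G : SimpleGraph V) (X X' : Set V) : Prop :=
  ∃ X'' : Set V, X''.ncard < X'.ncard ∧ IsDeletionSet H G ((X \ X') ∪ X'')

/-- The data `(T, χ, L)` of a candidate tree `H`-decomposition. -/
structure PreDecomp (V : Type) : Type 1 where
  T : RTree
  χ : T.ι → Set V
  L : Set V

/-- `D = (T,χ,L)` is a tree `H`-decomposition of the subgraph of `G` induced by `W`: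
(0) all bags and `L` are contained in `W`;
(1) for each `v ∈ W` the nodes whose bag contains `v` form a nonempty connected subtree;
(2) every edge of `G[W]` is contained in some bag;
(3) every `v ∈ L` is in a unique bag, which is at a leaf;
(4) for every node `t`, `G[χ(t) ∩ L] ∈ H`. -/
def IsTreeHDecompOn (H : GraphClass) (G : SimpleGraph V) (W : Set V) (D : PreDecomp V) : Prop :=
  (∀ t, D.χ t ⊆ W) ∧
  D.L ⊆ W ∧
  (∀ v ∈ W, ((D.T.graph).induce {t | v ∈ D.χ t}).Connected) ∧
  (∀ u v : V, u ∈ W → v ∈ W → G.Adj u v → ∃ t, u ∈ D.χ t ∧ v ∈ D.χ t) ∧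
  (∀ v ∈ D.L, ∃! t, v ∈ D.χ t) ∧
  (∀ v ∈ D.L, ∀ t, v ∈ D.χ t → D.T.IsLeaf t) ∧
  (∀ t, H (G.induce (D.χ t ∩ D.L)))

/-- `D` is a tree `H`-decomposition of `G`. -/
def IsTreeHDecomp (H : GraphClass) (G : SimpleGraph V) (D : PreDecomp V) : Prop :=
  IsTreeHDecompOn H G Set.univ D

/-- The width of `(T,χ,L)`: `max(0, max_t |χ(t) \ L| - 1)`. -/
noncomputable def PreDecomp.width (D : PreDecomp V) : ℕ :=
  sSup (Set.range fun t => (D.χ t \ D.L).ncard) - 1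

/-- The `H`-treewidth of `G`: the minimum width of a tree `H`-decomposition of `G`. -/
noncomputable def htw (H : GraphClass) (G : SimpleGraph V) : ℕ :=
  sInf {n : ℕ | ∃ D : PreDecomp V, IsTreeHDecomp H G D ∧ D.width = n}

/-- The class of all graphs. -/
def TrivialClass : GraphClass := fun {_} _ => True

/-- A standard tree decomposition: a tree `H`-decomposition with `L = ∅`
(the choice of `H` is then irrelevant). -/
def IsTreeDecomp (G : SimpleGraph V) (D : PreDecomp V) : Prop :=
  IsTreeHDecomp TrivialClass G D ∧ D.L = ∅

/-- The treewidth of `G`. -/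
noncomputable def tw (G : SimpleGraph V) : ℕ :=
  sInf {n : ℕ | ∃ D : PreDecomp V, IsTreeDecomp G D ∧ D.width = n}

/-! Let `(C, S)` be the `(H,k)`-separation covering `Z`. Since no edge leaves `C` except into `S`,
`G - ((X \ C) ∪ S)` is the disjoint union of `G[C]` and an induced subgraph of `G - X`, so
`(X \ C) ∪ S` is again an `H`-deletion set and minimality of `X` gives `|X ∩ C| ≤ |S| ≤ k`.
A walk from `Z ⊆ C ∪ S` to `X` either meets `S` or stays in `C` until it reaches `X ∩ C`,
so `S ∪ (X ∩ C)` is a `(Z, X)`-separator of size at most `2k`. -/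

open SimpleGraph

noncomputable def SimpleGraph.induceUnionEmbeddingSum (G : SimpleGraph V) {A B : Set V}
    (hAB : ∀ a ∈ A, ∀ b ∈ B, ¬ G.Adj a b) : G.induce (A ∪ B) ↪g G.induce A ⊕g G.induce B := by
  classical
  refine ⟨⟨fun v => if h : v.1 ∈ A then .inl ⟨v, h⟩ else .inr ⟨v, v.2.resolve_left h⟩, ?_⟩, ?_⟩
  · intro v w hvw
    by_cases hv : v.1 ∈ A <;> by_cases hw : w.1 ∈ A <;> simp_all [Subtype.ext_iff]
  · intro v w
    change (_ ⊕g _).Adj (dite _ _ _) (dite _ _ _) ↔ _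
    by_cases hv : v.1 ∈ A <;> by_cases hw : w.1 ∈ A <;>
      simp only [hv, hw, dif_pos, dif_neg, not_false_iff, comap_adj,
        Function.Embedding.subtype_apply, sum_adj, false_iff]
    · exact hAB v hv w (w.2.resolve_left hw)
    · exact fun h => hAB w hw v (v.2.resolve_left hv) h.symm

variable {H : GraphClass} {G : SimpleGraph V}

theorem Hereditary.induce_of_subset (hher : Hereditary H) {A B : Set V} (hAB : A ⊆ B)
    (hB : H (G.induce B)) : H (G.induce A) :=
  hher _ _ hB (G.induceHomOfLE hAB)

theorem UnionClosed.induce_union (hun : UnionClosed H) (hher : Hereditary H) {A B : Set V}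
    (hAB : ∀ a ∈ A, ∀ b ∈ B, ¬ G.Adj a b) (hA : H (G.induce A)) (hB : H (G.induce B)) :
    H (G.induce (A ∪ B)) :=
  hher _ _ (hun _ _ hA hB) (G.induceUnionEmbeddingSum hAB)

theorem lam_le_ncard {X Y P : Set V} (hP : IsSeparator G X Y P) : lam G X Y ≤ P.ncard :=
  Nat.sInf_le ⟨P, hP, rfl⟩

variable {ℓ : ℕ} {C S : Set V}

theorem IsHSeparation.isDeletionSet_diff_union {X : Set V} (hher : Hereditary H)
    (hun : UnionClosed H) (hCS : IsHSeparation H G ℓ C S) (hX : IsDeletionSet H G X) :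
    IsDeletionSet H G ((X \ C) ∪ S) := by
  obtain ⟨-, hC, -, hN⟩ := hCS
  have hrest : H (G.induce (Xᶜ \ (C ∪ S))) := hher.induce_of_subset Set.sdiff_subset hX
  have hunion : H (G.induce (C ∪ Xᶜ \ (C ∪ S))) :=
    hun.induce_union hher
      (fun a ha b hb hab => hb.2 (.inr (hN a ha b hab fun hbC => hb.2 (.inl hbC)))) hC hrest
  refine hher.induce_of_subset ?_ hunion
  intro v hv
  by_cases hvC : v ∈ C
  · exact .inl hvC
  · simp_all

theorem IsHSeparation.ncard_inter_le [Finite V] {X : Set V} (hher : Hereditary H)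
    (hun : UnionClosed H) (hCS : IsHSeparation H G ℓ C S) (hX : IsDeletionSet H G X)
    (hmin : ∀ Y : Set V, IsDeletionSet H G Y → X.ncard ≤ Y.ncard) :
    (X ∩ C).ncard ≤ S.ncard := by
  have hle : X.ncard ≤ (X \ C).ncard + S.ncard :=
    (hmin _ (hCS.isDeletionSet_diff_union hher hun hX)).trans (Set.ncard_union_le _ _)
  have hsplit := Set.ncard_inter_add_ncard_sdiff_eq_ncard X C
  omega

theorem IsHSeparation.isSeparator_union_inter {Z : Set V} (hCS : IsHSeparation H G ℓ C S)
    (hZ : WeaklyCovers C S Z) (Y : Set V) : IsSeparator G Z Y (S ∪ (Y ∩ C)) := by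
  intro z y hz hy p
  obtain hzC | hzS := hZ hz
  · by_cases hyC : y ∈ C
    · exact ⟨y, p.end_mem_support, .inr ⟨hy, hyC⟩⟩
    -- the walk leaves `C`, and the first vertex outside `C` is a neighbour of `C`
    obtain ⟨d, hd, hfst, hsnd⟩ := p.exists_boundary_dart C hzC hyC
    exact ⟨d.snd, p.dart_snd_mem_support_of_mem_darts hd, .inl (hCS.2.2.2 _ hfst _ d.adj hsnd)⟩
  · exact ⟨z, p.start_mem_support, .inl hzS⟩

/-- if `X` is a minimum-size `H`-deletion set in `G` and `Z` is
weakly `(H,k)`-separable, then `λ_G(Z,X) ≤ 2k`. -/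
theorem lam_le_of_min_deletionSet {V : Type} [Fintype V] (H : GraphClass)
    (hher : Hereditary H) (hun : UnionClosed H)
    (G : SimpleGraph V) (X : Set V) (hX : IsDeletionSet H G X)
    (hmin : ∀ Y : Set V, IsDeletionSet H G Y → X.ncard ≤ Y.ncard)
    (k : ℕ) (Z : Set V) (hZ : WeaklySeparable H G k Z) :
    lam G Z X ≤ 2 * k := by
  obtain ⟨C, S, hCS, hcov⟩ := hZ
  calc lam G Z X ≤ (S ∪ (X ∩ C)).ncard := lam_le_ncard (hCS.isSeparator_union_inter hcov X)
    _ ≤ S.ncard + (X ∩ C).ncard := Set.ncard_union_le _ _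
    _ ≤ k + k := add_le_add hCS.2.2.1 ((hCS.ncard_inter_le hher hun hX hmin).trans hCS.2.2.1)
    _ = 2 * k := (two_mul k).symm
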